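/- Let G_i = (V_i, E_i), i = 1, ..., k, be finite simple graphs with nonempty vertex sets. Suppose W ⊆ V_1 × ... × V_k contains no orthogonal path, i.e. there is no choice of edges {u_i, w_i} ∈ E_i for i = 1, ..., k such that the k+1 tuples U_j = (u_1, ..., u_j, w_{j+1}, ..., w_k), for j = 0, 1, ..., k, all lie in W. Then |W| / (|V_1| ⋯ |V_k|) ≤ Σ_{i=1}^{k} α(G_i)/|V_i|. -/

import Mathlib

/-!
Let `T_j ⊆ W` be the set of points from which one can walk inside `W` by changing the
coordinates `j, j+1, …, k-1` one at a time, each along an edge of the corresponding graph.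
Then `T_k = W`, and `T_0 = ∅` because a point of `T_0` starts an orthogonal path. A point of
`T_{j+1} \ T_j` has no neighbour in `T_{j+1} \ T_j` along the `j`-th coordinate line through it,
so each such line meets `T_{j+1} \ T_j` in an independent set of `G_j`, and the density of
`T_{j+1} \ T_j` is at most `α(G_j) / |V_j|`. Summing over `j` bounds the density of `W`.
-/

open Finset

noncomputable def indepNum {V : Type*} [Fintype V] (G : SimpleGraph V) : ℕ :=
  sSup {m | ∃ s : Finset V, (∀ x ∈ s, ∀ y ∈ s, ¬ G.Adj x y) ∧ s.card = m}

theorem card_le_indepNum {V : Type*} [Fintype V] (G : SimpleGraph V) (s : Finset V)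
    (hs : ∀ x ∈ s, ∀ y ∈ s, ¬ G.Adj x y) : #s ≤ indepNum G := by
  refine le_csSup ⟨Fintype.card V, ?_⟩ ⟨s, hs, rfl⟩
  rintro _ ⟨t, -, rfl⟩
  exact card_le_univ t

theorem Fin.subset_union_biUnion_sdiff {α : Type*} [DecidableEq α] {n : ℕ}
    (f : Fin (n + 1) → Finset α) (j : Fin (n + 1)) :
    f j ⊆ f 0 ∪ univ.biUnion fun i : Fin n => f i.succ \ f i.castSucc := by
  induction j using Fin.induction with
  | zero => exact subset_union_left
  | succ i ih =>
    intro z hz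
    by_cases hi : z ∈ f i.castSucc
    · exact ih hi
    · exact mem_union_right _ (mem_biUnion.mpr ⟨i, mem_univ _, mem_sdiff.mpr ⟨hz, hi⟩⟩)

section Lines

variable {ι : Type*} [Fintype ι] [DecidableEq ι] {V : ι → Type*} [∀ i, Fintype (V i)]
  {c : ι} (H : SimpleGraph (V c)) {S : Finset (∀ i, V i)}

theorem card_le_indepNum_mul_card_of_forall_adj_update_notMem
    (hS : ∀ z ∈ S, ∀ y, H.Adj (z c) y → Function.update z c y ∉ S) :
    #S ≤ indepNum H * Fintype.card (∀ j : {j // j ≠ c}, V j) := by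
  classical
  let rest : (∀ i, V i) → ∀ j : {j // j ≠ c}, V j := fun z j => z j
  have eq_update : ∀ z z', rest z = rest z' → z' = Function.update z c (z' c) := fun z z' h =>
    Function.eq_update_iff.mpr ⟨rfl, fun j hj => (congrFun h ⟨j, hj⟩).symm⟩
  rw [card_eq_sum_card_fiberwise (f := rest) (t := univ) fun _ _ => mem_univ _, mul_comm,
    ← smul_eq_mul, ← card_univ, ← sum_const]
  refine sum_le_sum fun r _ => ?_
  have hinj :
      Set.InjOn (fun z => z c) (({z ∈ S | rest z = r} : Finset _) : Set (∀ i, V i)) := by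
    intro z hz z' hz' h
    rw [mem_coe, mem_filter] at hz hz'
    rw [eq_update z z' (hz.2.trans hz'.2.symm), ← show z c = z' c from h, Function.update_eq_self]
  rw [← card_image_of_injOn hinj]
  refine card_le_indepNum H _ ?_
  simp only [mem_image, mem_filter]
  rintro _ ⟨z, ⟨hzS, hz⟩, rfl⟩ _ ⟨z', ⟨hz'S, hz'⟩, rfl⟩ hadj
  exact hS z hzS _ hadj (eq_update z z' (hz.trans hz'.symm) ▸ hz'S)

theorem card_div_card_pi_le_indepNum_div_card
    (hS : ∀ z ∈ S, ∀ y, H.Adj (z c) y → Function.update z c y ∉ S) :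
    (#S : ℝ) / Fintype.card (∀ i, V i) ≤ indepNum H / Fintype.card (V c) := by
  set R := Fintype.card (∀ j : {j // j ≠ c}, V j)
  have hcard : Fintype.card (∀ i, V i) = Fintype.card (V c) * R := by
    rw [Fintype.card_congr (Equiv.piSplitAt c V), Fintype.card_prod]
  rw [hcard, Nat.cast_mul]
  rcases eq_or_ne (R : ℝ) 0 with hR | hR
  · rw [hR, mul_zero, div_zero]
    positivity
  calc (#S : ℝ) / (Fintype.card (V c) * R) ≤ (indepNum H * R) / (Fintype.card (V c) * R) := by
        gcongr
        exact_mod_cast card_le_indepNum_mul_card_of_forall_adj_update_notMem H hS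
    _ = indepNum H / Fintype.card (V c) := mul_div_mul_right _ _ hR

end Lines

section OrthogonalPath

open Classical

variable {k : ℕ} {V : Fin k → Type*}

/-- The tuple `U_l = (u 1, …, u l, w (l+1), …, w k)` of an orthogonal path. -/
def corner (u w : ∀ i, V i) (l : ℕ) : ∀ i, V i :=
  fun i => if (i : ℕ) < l then u i else w i

theorem corner_eq_right {u w : ∀ i, V i} {l : ℕ} (h : ∀ i : Fin k, (i : ℕ) < l → u i = w i) :
    corner u w l = w := by
  funext i
  unfold corner
  split_ifs with hi
  exacts [h i hi, rfl]

theorem corner_update_right {u w : ∀ i, V i} {l : ℕ} {c : Fin k} (hc : (c : ℕ) < l) (y : V c) :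
    corner u (Function.update w c y) l = corner u w l := by
  funext i
  unfold corner
  split_ifs with hi
  · rfl
  · rw [Function.update_of_ne (by rintro rfl; exact hi hc)]

variable (G : ∀ i, SimpleGraph (V i)) (W : Finset (∀ i, V i))

/-- The set `T_j` of the proof sketch above. -/
noncomputable def completable : Fin (k + 1) → Finset (∀ i, V i) :=
  Fin.reverseInduction W fun c T =>
    {z ∈ W | ∃ y, (G c).Adj (z c) y ∧ Function.update z c y ∈ T}

theorem completable_last : completable G W (Fin.last k) = W :=
  Fin.reverseInduction_last

theorem mem_completable_castSucc {c : Fin k} {z : ∀ i, V i} :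
    z ∈ completable G W c.castSucc ↔
      z ∈ W ∧ ∃ y, (G c).Adj (z c) y ∧ Function.update z c y ∈ completable G W c.succ := by
  rw [completable, Fin.reverseInduction_castSucc, mem_filter]
  rfl

theorem completable_subset (j : Fin (k + 1)) : completable G W j ⊆ W := by
  induction j using Fin.lastCases with
  | last => rw [completable_last]
  | cast c => exact fun z hz => ((mem_completable_castSucc G W).mp hz).1

theorem exists_corner_mem_of_mem_completable {j : Fin (k + 1)} {z : ∀ i, V i}
    (hz : z ∈ completable G W j) :
    ∃ u : ∀ i, V i, (∀ i : Fin k, (j : ℕ) ≤ i → (G i).Adj (z i) (u i)) ∧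
      (∀ i : Fin k, (i : ℕ) < j → u i = z i) ∧
      ∀ l : Fin (k + 1), (j : ℕ) ≤ l → corner u z l ∈ W := by
  induction j using Fin.reverseInduction generalizing z with
  | last =>
    refine ⟨z, fun i hi => absurd i.isLt (by simp at hi; omega), fun _ _ => rfl, fun l _ => ?_⟩
    rw [corner_eq_right fun _ _ => rfl, ← completable_last G W]
    exact hz
  | cast c ih =>
    obtain ⟨hzW, y, hadj, hy⟩ := (mem_completable_castSucc G W).mp hz
    obtain ⟨u, hu_adj, hu_eq, hu_mem⟩ := ih hy
    simp only [Fin.val_castSucc, Fin.val_succ] at *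
    have huc : u c = y := by simpa using hu_eq c (by omega)
    have hu_eq' : ∀ i : Fin k, (i : ℕ) < c → u i = z i := fun i hi => by
      rw [hu_eq i (by omega), Function.update_of_ne (by rintro rfl; omega)]
    refine ⟨u, fun i hi => ?_, hu_eq', fun l hl => ?_⟩
    · rcases eq_or_ne i c with rfl | hic
      · rwa [huc]
      · simpa [Function.update_of_ne hic] using hu_adj i (by omega)
    · rcases eq_or_lt_of_le hl with hl | hl
      · rwa [← hl, corner_eq_right hu_eq']
      · rw [← corner_update_right hl y]
        exact hu_mem l (by omega)

theorem completable_zero_eq_empty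
    (hW : ¬ ∃ (u w : ∀ i, V i), (∀ i, (G i).Adj (u i) (w i)) ∧
      ∀ j : Fin (k + 1), corner u w j ∈ W) :
    completable G W 0 = ∅ := by
  refine eq_empty_of_forall_notMem fun z hz => hW ?_
  obtain ⟨u, hu_adj, -, hu_mem⟩ := exists_corner_mem_of_mem_completable G W hz
  exact ⟨u, z, fun i => (hu_adj i (by simp)).symm, fun j => hu_mem j (by simp)⟩

theorem forall_adj_update_notMem_completable_sdiff (c : Fin k) :
    ∀ z ∈ completable G W c.succ \ completable G W c.castSucc, ∀ y, (G c).Adj (z c) y →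
      Function.update z c y ∉ completable G W c.succ \ completable G W c.castSucc := by
  intro z hz y hadj hy
  rw [mem_sdiff] at hz hy
  exact hz.2 ((mem_completable_castSucc G W).mpr ⟨completable_subset G W _ hz.1, y, hadj, hy.1⟩)

end OrthogonalPath

theorem cutting_corners_orthogonal_path_general {k : ℕ} {V : Fin k → Type*}
    [∀ i, Fintype (V i)]
    (G : ∀ i, SimpleGraph (V i)) (W : Finset (∀ i, V i))
    (hW : ¬ ∃ (u w : ∀ i, V i), (∀ i, (G i).Adj (u i) (w i)) ∧
      ∀ j : Fin (k+1), (fun i : Fin k => if (i : ℕ) < (j : ℕ) then u i else w i) ∈ W) :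
    (W.card : ℝ) / ∏ i, (Fintype.card (V i) : ℝ) ≤
      ∑ i, (indepNum (G i) : ℝ) / (Fintype.card (V i) : ℝ) := by
  classical
  set D := fun c : Fin k => completable G W c.succ \ completable G W c.castSucc
  have hcover : W ⊆ univ.biUnion D := by
    simpa [completable_last, completable_zero_eq_empty G W hW] using
      Fin.subset_union_biUnion_sdiff (completable G W) (Fin.last k)
  have hprod : ∏ i, (Fintype.card (V i) : ℝ) = Fintype.card (∀ i, V i) := by
    rw [Fintype.card_pi, Nat.cast_prod]
  rw [hprod]
  calc (#W : ℝ) / Fintype.card (∀ i, V i) ≤ (∑ c, #(D c) : ℕ) / Fintype.card (∀ i, V i) := by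
        gcongr
        exact (card_le_card hcover).trans card_biUnion_le
    _ = ∑ c, (#(D c) : ℝ) / Fintype.card (∀ i, V i) := by rw [Nat.cast_sum, sum_div]
    _ ≤ ∑ c, (indepNum (G c) : ℝ) / Fintype.card (V c) := sum_le_sum fun c _ =>
        card_div_card_pi_le_indepNum_div_card (G c)
          (forall_adj_update_notMem_completable_sdiff G W c)

/-- If `W ⊆ V 1 × ⋯ × V k` contains no orthogonal path, then
`|W| / (|V 1| ⋯ |V k|) ≤ Σ α(G i)/|V i|`.  Here an orthogonal path is a choice of
edges `(u i, w i) ∈ E i` such that all the tuples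
`U j = (u 1, …, u j, w (j+1), …, w k)`, `j = 0, …, k`, lie in `W`. -/
theorem cutting_corners_orthogonal_path {k : ℕ} {V : Fin k → Type*}
    [∀ i, Fintype (V i)] [∀ i, Nonempty (V i)]
    (G : ∀ i, SimpleGraph (V i)) (W : Finset (∀ i, V i))
    (hW : ¬ ∃ (u w : ∀ i, V i), (∀ i, (G i).Adj (u i) (w i)) ∧
      ∀ j : Fin (k+1), (fun i : Fin k => if (i : ℕ) < (j : ℕ) then u i else w i) ∈ W) :
    (W.card : ℝ) / ∏ i, (Fintype.card (V i) : ℝ) ≤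
      ∑ i, (indepNum (G i) : ℝ) / (Fintype.card (V i) : ℝ) :=
  cutting_corners_orthogonal_path_general G W hW
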